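/- arXiv:2209.06514 — 7 statements merged into one kernel-verified Lean document; each statement's English description precedes it below -/
import Mathlib

section
/- Let f be a complementary choice function on X. Then f is the union of the packaged choice functions f_K over all open sets K (i.e., sets K with f(K) = K): for all A, f(A) = ⋃_{K open, K ⊆ A} K. Equivalently, f(A) is the largest open subset of A. -/
/-! Consistency, applied with `B = f A`, makes `f A` open, and monotonicity gives `K = f K ⊆ f A`
for every open `K ⊆ A`. So `f A` is the greatest open subset of `A`, hence the union of all of them. -/

section ChoiceFunction

variable {X : Type*} {f : Set X → Set X}

theorem choice_idem (hchoice : ∀ A : Set X, f A ⊆ A)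
    (hcons : ∀ A B : Set X, f A ⊆ B → B ⊆ A → f B = f A) (A : Set X) :
    f (f A) = f A :=
  hcons A (f A) subset_rfl (hchoice A)

theorem subset_choice_of_open (hmono : ∀ A B : Set X, A ⊆ B → f A ⊆ f B)
    {K A : Set X} (hK : f K = K) (hKA : K ⊆ A) : K ⊆ f A :=
  hK ▸ hmono K A hKA

theorem isGreatest_open_subset_choice (hchoice : ∀ A : Set X, f A ⊆ A)
    (hmono : ∀ A B : Set X, A ⊆ B → f A ⊆ f B)
    (hcons : ∀ A B : Set X, f A ⊆ B → B ⊆ A → f B = f A) (A : Set X) :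
    IsGreatest {K : Set X | f K = K ∧ K ⊆ A} (f A) :=
  ⟨⟨choice_idem hchoice hcons A, hchoice A⟩,
    fun _ ⟨hK, hKA⟩ => subset_choice_of_open hmono hK hKA⟩

end ChoiceFunction

theorem stmt_4 {X : Type*} (f : Set X → Set X)
    (hchoice : ∀ A : Set X, f A ⊆ A)
    (hmono : ∀ A B : Set X, A ⊆ B → f A ⊆ f B)
    (hcons : ∀ A B : Set X, f A ⊆ B → B ⊆ A → f B = f A) :
    ∀ A : Set X,
      f A = ⋃₀ {K : Set X | f K = K ∧ K ⊆ A} ∧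
      f (f A) = f A ∧ f A ⊆ A ∧
      (∀ K : Set X, f K = K → K ⊆ A → K ⊆ f A) := by
  intro A
  have hgreatest := isGreatest_open_subset_choice hchoice hmono hcons A
  refine ⟨?_, hgreatest.1.1, hchoice A, fun K hK hKA => hgreatest.2 ⟨hK, hKA⟩⟩
  rw [← Set.sSup_eq_sUnion, hgreatest.isLUB.sSup_eq]
end

section
/- The map sending a complementary choice function f to its set St(f) of open sets is a bijection between complementary choice functions on X and pre-topologies on X (collections of subsets closed under arbitrary unions). -/
/-!
A complementary choice function is an interior operator: `f A` is the union of the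
`f`-fixed sets contained in `A`, so `f` is recovered from `St f`, and `St f` is closed
under unions. Conversely, for any family `P` the map `A ↦ ⋃ {K ∈ P | K ⊆ A}` is
complementary, and its fixed sets are exactly `P` when `P` is closed under unions.
-/

open Set

section

variable {X : Type*}

structure IsComplementary (f : Set X → Set X) : Prop where
  subset : ∀ A, f A ⊆ A
  mono : ∀ A B, A ⊆ B → f A ⊆ f B
  consistent : ∀ A B, f A ⊆ B → B ⊆ A → f B = f A

def interiorIn (P : Set (Set X)) (A : Set X) : Set X :=
  ⋃₀ {K | K ∈ P ∧ K ⊆ A}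

namespace IsComplementary

variable {f g : Set X → Set X}

theorem idem (hf : IsComplementary f) (A : Set X) : f (f A) = f A :=
  hf.consistent A (f A) subset_rfl (hf.subset A)

theorem sUnion_mem (hf : IsComplementary f) {S : Set (Set X)}
    (hS : S ⊆ {K | f K = K}) : ⋃₀ S ∈ {K | f K = K} := by
  refine (hf.subset _).antisymm (sUnion_subset fun K hK => ?_)
  calc K = f K := (hS hK).symm
    _ ⊆ f (⋃₀ S) := hf.mono _ _ (subset_sUnion_of_mem hK)

theorem eq_interiorIn (hf : IsComplementary f) (A : Set X) :
    f A = interiorIn {K | f K = K} A := by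
  refine subset_antisymm (subset_sUnion_of_mem ⟨hf.idem A, hf.subset A⟩) ?_
  rintro x ⟨K, ⟨hK, hKA⟩, hxK⟩
  exact hf.mono K A hKA (hK.symm ▸ hxK)

theorem ext_of_fixedPoints_eq (hf : IsComplementary f) (hg : IsComplementary g)
    (h : {K | f K = K} = {K | g K = K}) : f = g := by
  funext A
  rw [hf.eq_interiorIn, hg.eq_interiorIn, h]

end IsComplementary

theorem interiorIn_subset (P : Set (Set X)) (A : Set X) : interiorIn P A ⊆ A :=
  sUnion_subset fun _ hK => hK.2

theorem interiorIn_mono (P : Set (Set X)) {A B : Set X} (hAB : A ⊆ B) :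
    interiorIn P A ⊆ interiorIn P B :=
  sUnion_subset_sUnion fun _ ⟨hKP, hKA⟩ => ⟨hKP, hKA.trans hAB⟩

theorem isComplementary_interiorIn (P : Set (Set X)) : IsComplementary (interiorIn P) where
  subset := interiorIn_subset P
  mono _ _ := interiorIn_mono P
  consistent A _ hAB hBA :=
    (interiorIn_mono P hBA).antisymm <| sUnion_subset_sUnion fun K ⟨hKP, hKA⟩ =>
      ⟨hKP, (subset_sUnion_of_mem (⟨hKP, hKA⟩ : K ∈ {K | K ∈ P ∧ K ⊆ A})).trans hAB⟩

theorem fixedPoints_interiorIn {P : Set (Set X)} (hP : ∀ S ⊆ P, ⋃₀ S ∈ P) :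
    {K | interiorIn P K = K} = P := by
  ext A
  refine ⟨fun hA => hA ▸ hP _ fun _ hK => hK.1, fun hA => ?_⟩
  exact (interiorIn_subset P A).antisymm (subset_sUnion_of_mem ⟨hA, subset_rfl⟩)

end

/-- The map `f ↦ St f = {K | f K = K}` is a bijection between complementary
choice functions and pre-topologies (families closed under arbitrary unions). -/
theorem stmt_7 {X : Type*} :
    (∀ f : Set X → Set X,
      ((∀ A : Set X, f A ⊆ A) ∧ (∀ A B : Set X, A ⊆ B → f A ⊆ f B) ∧
        (∀ A B : Set X, f A ⊆ B → B ⊆ A → f B = f A)) →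
      ∀ S ⊆ {K : Set X | f K = K}, ⋃₀ S ∈ {K : Set X | f K = K}) ∧
    (∀ f g : Set X → Set X,
      ((∀ A : Set X, f A ⊆ A) ∧ (∀ A B : Set X, A ⊆ B → f A ⊆ f B) ∧
        (∀ A B : Set X, f A ⊆ B → B ⊆ A → f B = f A)) →
      ((∀ A : Set X, g A ⊆ A) ∧ (∀ A B : Set X, A ⊆ B → g A ⊆ g B) ∧
        (∀ A B : Set X, g A ⊆ B → B ⊆ A → g B = g A)) →
      {K : Set X | f K = K} = {K : Set X | g K = K} → f = g) ∧
    (∀ P : Set (Set X), (∀ S ⊆ P, ⋃₀ S ∈ P) →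
      ∃ f : Set X → Set X,
        ((∀ A : Set X, f A ⊆ A) ∧ (∀ A B : Set X, A ⊆ B → f A ⊆ f B) ∧
          (∀ A B : Set X, f A ⊆ B → B ⊆ A → f B = f A)) ∧
        {K : Set X | f K = K} = P) := by
  refine ⟨?_, ?_, ?_⟩
  · rintro f ⟨h₁, h₂, h₃⟩ S hS
    exact IsComplementary.sUnion_mem ⟨h₁, h₂, h₃⟩ hS
  · rintro f g ⟨hf₁, hf₂, hf₃⟩ ⟨hg₁, hg₂, hg₃⟩ h
    exact IsComplementary.ext_of_fixedPoints_eq ⟨hf₁, hf₂, hf₃⟩ ⟨hg₁, hg₂, hg₃⟩ h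
  · intro P hP
    obtain ⟨h₁, h₂, h₃⟩ := isComplementary_interiorIn P
    exact ⟨interiorIn P, ⟨h₁, h₂, h₃⟩, fixedPoints_interiorIn hP⟩
end

section
/- Let φ : Y → X be a map and g a complementary choice function on Y. Define f(A) = φ(g(φ⁻¹(A))) for A ⊆ X. Then f is a complementary choice function on X. -/
theorem stmt_11 {X Y : Type*} (φ : Y → X) (g : Set Y → Set Y)
    (hchoice : ∀ B : Set Y, g B ⊆ B)
    (hmono : ∀ B C : Set Y, B ⊆ C → g B ⊆ g C)
    (hcons : ∀ B C : Set Y, g B ⊆ C → C ⊆ B → g C = g B)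
    (f : Set X → Set X) (hf : ∀ A : Set X, f A = φ '' g (φ ⁻¹' A)) :
    (∀ A : Set X, f A ⊆ A) ∧
    (∀ A B : Set X, A ⊆ B → f A ⊆ f B) ∧
    (∀ A B : Set X, f A ⊆ B → B ⊆ A → f B = f A) := by
  refine ⟨?_, ?_, ?_⟩
  · intro A
    rw [hf]
    exact (Set.image_mono (f := φ) (hchoice _)).trans (Set.image_preimage_subset φ A)
  · intro A B hAB
    rw [hf, hf]
    exact Set.image_mono (f := φ) (hmono _ _ (Set.preimage_mono hAB))
  · intro A B h1 h2
    rw [hf, hf]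
    have hsub : g (φ ⁻¹' A) ⊆ φ ⁻¹' B := by
      intro y hy
      exact h1 (by rw [hf]; exact ⟨y, hy, rfl⟩)
    rw [hcons _ _ hsub (Set.preimage_mono h2)]
end

section
/- For any complementary choice function f on X, there exist a set Y, a map φ : Y → X, and a completely complementary choice function g on Y (the ideal choice function of a preorder on Y) such that f(A) = φ(g(φ⁻¹(A))) for all A ⊆ X. -/
/-!
Tag every point chosen by `f` with a menu it is chosen from: `Y = {(x, S) | x ∈ f S}`, preordered
by "same menu". The ideal choice function of this preorder keeps exactly the whole blocks
`f S × {S}` that lie inside the preimage of `A`, so its image is the union of all `f S ⊆ A`.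
That union is `f A`: it contains `f A` since `f A ⊆ A`, and if `f S ⊆ A` then consistency gives
`f S = f (S ∩ A)`, which is contained in `f A` by monotonicity.
-/

section ChoiceFunction

variable {X : Type*} {f : Set X → Set X}

theorem apply_subset_apply_of_apply_subset (hchoice : ∀ A : Set X, f A ⊆ A)
    (hmono : ∀ A B : Set X, A ⊆ B → f A ⊆ f B)
    (hcons : ∀ A B : Set X, f A ⊆ B → B ⊆ A → f B = f A) {A S : Set X} (h : f S ⊆ A) :
    f S ⊆ f A := by
  have hinter : f (S ∩ A) = f S :=
    hcons S (S ∩ A) (Set.subset_inter (hchoice S) h) Set.inter_subset_left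
  exact hinter ▸ hmono _ _ Set.inter_subset_right

theorem eq_setOf_exists_apply_subset (hchoice : ∀ A : Set X, f A ⊆ A)
    (hmono : ∀ A B : Set X, A ⊆ B → f A ⊆ f B)
    (hcons : ∀ A B : Set X, f A ⊆ B → B ⊆ A → f B = f A) (A : Set X) :
    f A = {x | ∃ S, x ∈ f S ∧ f S ⊆ A} := by
  ext x
  exact ⟨fun hx => ⟨A, hx, hchoice A⟩,
    fun ⟨_, hxS, hSA⟩ => apply_subset_apply_of_apply_subset hchoice hmono hcons hSA hxS⟩

variable (f) in
def ChoiceGraph : Type _ := {p : X × Set X // p.1 ∈ f p.2}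

namespace ChoiceGraph

def point (p : ChoiceGraph f) : X := p.1.1

def menu (p : ChoiceGraph f) : Set X := p.1.2

theorem image_point_sameMenuIdeal (A : Set X) :
    (point : ChoiceGraph f → X) ''
        {b ∈ point ⁻¹' A | ∀ y : ChoiceGraph f, y.menu = b.menu → y ∈ point ⁻¹' A} =
      {x | ∃ S, x ∈ f S ∧ f S ⊆ A} := by
  ext x
  constructor
  · rintro ⟨⟨⟨x, S⟩, hxS⟩, ⟨-, hblock⟩, rfl⟩
    exact ⟨S, hxS, fun y hy => hblock ⟨(y, S), hy⟩ rfl⟩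
  · rintro ⟨S, hxS, hSA⟩
    exact ⟨⟨(x, S), hxS⟩, ⟨hSA hxS, by
      rintro ⟨⟨y, T⟩, hyT⟩ (rfl : T = S)
      exact hSA hyT⟩, rfl⟩

end ChoiceGraph

end ChoiceFunction

theorem stmt_12 {X : Type} (f : Set X → Set X)
    (hchoice : ∀ A : Set X, f A ⊆ A)
    (hmono : ∀ A B : Set X, A ⊆ B → f A ⊆ f B)
    (hcons : ∀ A B : Set X, f A ⊆ B → B ⊆ A → f B = f A) :
    ∃ (Y : Type) (φ : Y → X) (g : Set Y → Set Y) (r : Y → Y → Prop),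
      Reflexive r ∧ Transitive r ∧
      (∀ B : Set Y, g B = {b ∈ B | ∀ y : Y, r y b → y ∈ B}) ∧
      (∀ A : Set X, f A = φ '' g (φ ⁻¹' A)) := by
  refine ⟨ChoiceGraph f, ChoiceGraph.point,
    fun B => {b ∈ B | ∀ y, y.menu = b.menu → y ∈ B}, fun y b => y.menu = b.menu,
    fun _ => rfl, fun _ _ _ => Eq.trans, fun _ => rfl, fun A => ?_⟩
  rw [ChoiceGraph.image_point_sameMenuIdeal, eq_setOf_exists_apply_subset hchoice hmono hcons]
end

section
/- Let X be finite and u : Set X → ℝ supermodular. For each A ⊆ X let f(A) be the unique inclusion-minimal maximizer of u among subsets of A. Then f is monotone: A ⊆ B implies f(A) ⊆ f(B) (and hence f is a complementary choice function). -/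
theorem le_map_inf_of_map_sup_le {α β : Type*} [Lattice α] [AddCommMonoid β] [PartialOrder β]
    [IsOrderedCancelAddMonoid β] {u : α → β}
    (hsuper : ∀ a b, u a + u b ≤ u (a ⊓ b) + u (a ⊔ b)) {a b : α} (hb : u (a ⊔ b) ≤ u b) :
    u a ≤ u (a ⊓ b) :=
  le_of_add_le_add_right <| (hsuper a b).trans (add_le_add le_rfl hb)

theorem stmt_14_general {X : Type*} (u : Set X → ℝ)
    (hsuper : ∀ A B : Set X, u A + u B ≤ u (A ∩ B) + u (A ∪ B))
    (f : Set X → Set X)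
    (hsub : ∀ A : Set X, f A ⊆ A)
    (hmax : ∀ A : Set X, ∀ C ⊆ A, u C ≤ u (f A))
    (hminimal : ∀ A : Set X, ∀ C ⊆ A, (∀ D ⊆ A, u D ≤ u C) → f A ⊆ C) :
    ∀ A B : Set X, A ⊆ B → f A ⊆ f B := by
  intro A B hAB
  have hunion : f A ∪ f B ⊆ B := Set.union_subset ((hsub A).trans hAB) (hsub B)
  have hinter : f A ∩ f B ⊆ A := Set.inter_subset_left.trans (hsub A)
  have hgain : u (f A) ≤ u (f A ∩ f B) :=
    le_map_inf_of_map_sup_le hsuper (hmax B _ hunion)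
  have hfA : f A ⊆ f A ∩ f B :=
    hminimal A _ hinter fun D hD => (hmax A D hD).trans hgain
  exact hfA.trans Set.inter_subset_right

theorem stmt_14 {X : Type*} [Fintype X] (u : Set X → ℝ)
    (hsuper : ∀ A B : Set X, u A + u B ≤ u (A ∩ B) + u (A ∪ B))
    (f : Set X → Set X)
    (hsub : ∀ A : Set X, f A ⊆ A)
    (hmax : ∀ A : Set X, ∀ C ⊆ A, u C ≤ u (f A))
    (hminimal : ∀ A : Set X, ∀ C ⊆ A, (∀ D ⊆ A, u D ≤ u C) → f A ⊆ C) :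
    ∀ A B : Set X, A ⊆ B → f A ⊆ f B :=
  stmt_14_general u hsuper f hsub hmax hminimal
end

section
/- Let f be a complementary choice function on a finite set X. Define u(A) to be the number of open sets (sets K with f(K) = K) contained in A. Then u is supermodular, and for every A ⊆ X, f(A) is the inclusion-minimal subset of A with the largest value of u among all subsets of A. -/
/-!
Every open set `K ⊆ A` satisfies `K = f K ⊆ f A` by monotonicity, and `f A` is itself open by
consistency, so the open subsets of `A` are exactly those of `f A`. Hence `u (f A) = u A`
dominates `u C` for `C ⊆ A`, and if `u C` attains this maximum then `C` contains every open
subset of `A`, in particular `f A`. Supermodularity holds for counting the members of any finite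
family below a set: those below `A ∩ B` are those below both, and those below `A` or `B` lie
below `A ∪ B`.
-/

open Set Function

section CountBelow

variable {α : Type*} {𝒦 : Set α}

theorem ncard_inter_Iic_mono [Preorder α] (h𝒦 : 𝒦.Finite) {a b : α} (hab : a ≤ b) :
    (𝒦 ∩ Iic a).ncard ≤ (𝒦 ∩ Iic b).ncard :=
  ncard_le_ncard (inter_subset_inter_right _ (Iic_subset_Iic.2 hab)) (h𝒦.inter_of_left _)

theorem ncard_inter_Iic_add_le [Lattice α] (h𝒦 : 𝒦.Finite) (a b : α) :
    (𝒦 ∩ Iic a).ncard + (𝒦 ∩ Iic b).ncard ≤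
      (𝒦 ∩ Iic (a ⊓ b)).ncard + (𝒦 ∩ Iic (a ⊔ b)).ncard := by
  have hinter : 𝒦 ∩ Iic (a ⊓ b) = (𝒦 ∩ Iic a) ∩ (𝒦 ∩ Iic b) := by
    rw [← Iic_inter_Iic, inter_inter_distrib_left]
  have hunion : (𝒦 ∩ Iic a) ∪ (𝒦 ∩ Iic b) ⊆ 𝒦 ∩ Iic (a ⊔ b) := by
    rw [← inter_union_distrib_left]
    exact inter_subset_inter_right _ (union_subset (Iic_subset_Iic.2 le_sup_left)
      (Iic_subset_Iic.2 le_sup_right))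
  rw [← ncard_union_add_ncard_inter _ _ (h𝒦.inter_of_left _) (h𝒦.inter_of_left _), hinter,
    add_comm]
  exact Nat.add_le_add_left (ncard_le_ncard hunion (h𝒦.inter_of_left _)) _

theorem le_of_ncard_inter_Iic_le [Preorder α] (h𝒦 : 𝒦.Finite) {m a c : α} (hm : m ∈ 𝒦)
    (hma : m ≤ a) (hca : c ≤ a) (hcard : (𝒦 ∩ Iic a).ncard ≤ (𝒦 ∩ Iic c).ncard) : m ≤ c := by
  have hsub : 𝒦 ∩ Iic c ⊆ 𝒦 ∩ Iic a := inter_subset_inter_right _ (Iic_subset_Iic.2 hca)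
  have heq : 𝒦 ∩ Iic c = 𝒦 ∩ Iic a := eq_of_subset_of_ncard_le hsub hcard (h𝒦.inter_of_left _)
  have hmem : m ∈ 𝒦 ∩ Iic c := heq ▸ ⟨hm, hma⟩
  exact hmem.2

end CountBelow

section ChoiceFunction

variable {α : Type*} [Preorder α] {f : α → α}

theorem isFixedPt_apply_of_consistent (hchoice : ∀ a, f a ≤ a)
    (hcons : ∀ a b, f a ≤ b → b ≤ a → f b = f a) (a : α) : IsFixedPt f (f a) :=
  hcons a (f a) le_rfl (hchoice a)

theorem fixedPoints_inter_Iic_apply (hchoice : ∀ a, f a ≤ a) (hmono : ∀ a b, a ≤ b → f a ≤ f b)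
    (a : α) : fixedPoints f ∩ Iic (f a) = fixedPoints f ∩ Iic a := by
  refine Subset.antisymm (inter_subset_inter_right _ (Iic_subset_Iic.2 (hchoice a))) ?_
  rintro k ⟨hk, hka⟩
  exact ⟨hk, hk.symm ▸ hmono k a hka⟩

end ChoiceFunction

theorem stmt_16 {X : Type*} [Fintype X] (f : Set X → Set X)
    (hchoice : ∀ A : Set X, f A ⊆ A)
    (hmono : ∀ A B : Set X, A ⊆ B → f A ⊆ f B)
    (hcons : ∀ A B : Set X, f A ⊆ B → B ⊆ A → f B = f A)
    (u : Set X → ℝ)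
    (hu : ∀ A : Set X, u A = ({K : Set X | f K = K ∧ K ⊆ A}).ncard) :
    (∀ A B : Set X, u A + u B ≤ u (A ∩ B) + u (A ∪ B)) ∧
    (∀ A : Set X,
      f A ⊆ A ∧ (∀ C ⊆ A, u C ≤ u (f A)) ∧
      (∀ C ⊆ A, (∀ D ⊆ A, u D ≤ u C) → f A ⊆ C)) := by
  have hu' : ∀ A, u A = (fixedPoints f ∩ Iic A).ncard := hu
  have hfin : (fixedPoints f).Finite := toFinite _
  have hopen := fixedPoints_inter_Iic_apply hchoice hmono
  refine ⟨fun A B => ?_, fun A => ⟨hchoice A, fun C hC => ?_, fun C hC hmax => ?_⟩⟩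
  · simp only [hu']
    exact_mod_cast ncard_inter_Iic_add_le hfin A B
  · rw [hu', hu', hopen]
    exact_mod_cast ncard_inter_Iic_mono hfin hC
  · have hcard := hmax (f A) (hchoice A)
    rw [hu', hu', hopen] at hcard
    exact le_of_ncard_inter_Iic_le hfin (isFixedPt_apply_of_consistent hchoice hcons A)
      (hchoice A) hC (by exact_mod_cast hcard)
end

section
/- Let ⪯ be a supermodular weak order on 2^X, meaning a total preorder such that for all A, B: either A ⪯ A ∩ B or B ⪯ A ∪ B, and if A ∩ B ≺ A then B ≺ A ∪ B. For each A ⊆ X, there is a unique set A* ⊆ A such that every B ⊆ A satisfies B ⪯ A*, and every B with A* ⪯ B ⊆ A satisfies A* ⊆ B. The choice function f(A) = A* is complementary (monotone and consistent). -/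
lemma exists_max_aux {α : Type*} (r : α → α → Prop)
    (htrans : Transitive r) (htotal : ∀ a b, r a b ∨ r b a)
    (s : Finset α) (hs : s.Nonempty) : ∃ c ∈ s, ∀ b ∈ s, r b c := by
  classical
  induction s using Finset.induction with
  | empty => exact absurd hs (by simp)
  | @insert a s ha ih =>
    rcases s.eq_empty_or_nonempty with h | h
    · subst h
      refine ⟨a, by simp, fun b hb => ?_⟩
      simp only [Finset.mem_insert, Finset.notMem_empty, or_false] at hb
      subst hb
      rcases htotal b b with h | h <;> exact h
    · obtain ⟨c, hc, hcmax⟩ := ih h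
      rcases htotal a c with h1 | h1
      · exact ⟨c, Finset.mem_insert_of_mem hc, fun b hb => by
          rcases Finset.mem_insert.1 hb with rfl | hb
          · exact h1
          · exact hcmax b hb⟩
      · exact ⟨a, Finset.mem_insert_self a s, fun b hb => by
          rcases Finset.mem_insert.1 hb with rfl | hb
          · rcases htotal b b with h | h <;> exact h
          · exact htrans (hcmax b hb) h1⟩

theorem stmt_18 {X : Type*} [Fintype X] (r : Set X → Set X → Prop)
    (htrans : Transitive r) (htotal : ∀ A B : Set X, r A B ∨ r B A)
    (hsuper1 : ∀ A B : Set X, r A (A ∩ B) ∨ r B (A ∪ B))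
    (hsuper2 : ∀ A B : Set X, (r (A ∩ B) A ∧ ¬ r A (A ∩ B)) →
      (r B (A ∪ B) ∧ ¬ r (A ∪ B) B)) :
    (∀ A : Set X, ∃! C : Set X, C ⊆ A ∧ (∀ B ⊆ A, r B C) ∧
      (∀ B : Set X, r C B → B ⊆ A → C ⊆ B)) ∧
    (∀ f : Set X → Set X,
      (∀ A : Set X, f A ⊆ A ∧ (∀ B ⊆ A, r B (f A)) ∧
        (∀ B : Set X, r (f A) B → B ⊆ A → f A ⊆ B)) →
      (∀ A B : Set X, A ⊆ B → f A ⊆ f B) ∧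
      (∀ A B : Set X, f A ⊆ B → B ⊆ A → f B = f A)) := by
  classical
  have : Fintype (Set X) := Fintype.ofFinite _
  have part1 : ∀ A : Set X, ∃! C : Set X, C ⊆ A ∧ (∀ B ⊆ A, r B C) ∧
      (∀ B : Set X, r C B → B ⊆ A → C ⊆ B) := by
    intro A
    -- set of maximizers
    set S : Finset (Set X) := Finset.univ.filter (· ⊆ A) with hS
    have hSne : S.Nonempty := ⟨∅, by simp [hS]⟩
    obtain ⟨c0, hc0S, hc0max⟩ := exists_max_aux r htrans htotal S hSne
    set M : Finset (Set X) :=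
      Finset.univ.filter (fun B => B ⊆ A ∧ ∀ B' ⊆ A, r B' B) with hM
    have hMne : M.Nonempty := by
      refine ⟨c0, ?_⟩
      simp only [hM, Finset.mem_filter, Finset.mem_univ, true_and]
      refine ⟨by simpa [hS] using hc0S, fun B' hB' => hc0max B' (by simp [hS, hB'])⟩
    obtain ⟨C, hCM, hCmin⟩ := Finset.exists_minimal hMne
    have hCmem : C ⊆ A ∧ ∀ B' ⊆ A, r B' C := by
      simpa [hM] using hCM
    -- maximizers are closed under intersection with C
    have key : ∀ B : Set X, B ⊆ A → (∀ B' ⊆ A, r B' B) → C ⊆ B := by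
      intro B hBA hBmax
      have hCB : r C (C ∩ B) := by
        by_contra hnot
        have h1 : r (C ∩ B) C := hCmem.2 _ (fun x hx => hCmem.1 hx.1)
        obtain ⟨_, h3⟩ := hsuper2 C B ⟨h1, hnot⟩
        exact h3 (hBmax _ (Set.union_subset hCmem.1 hBA))
      have hinterM : C ∩ B ∈ M := by
        simp only [hM, Finset.mem_filter, Finset.mem_univ, true_and]
        exact ⟨fun x hx => hCmem.1 hx.1, fun B' hB' => htrans (hCmem.2 B' hB') hCB⟩
      have := hCmin hinterM
      have heq : C ∩ B = C := by
        rcases lt_or_eq_of_le (Set.inter_subset_left : C ∩ B ≤ C) with h | h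
        · exact absurd h (not_lt_of_ge (this h.le))
        · exact h
      intro x hx
      rw [← heq] at hx
      exact hx.2
    refine ⟨C, ⟨hCmem.1, hCmem.2, fun B hrCB hBA => ?_⟩, ?_⟩
    · exact key B hBA (fun B' hB' => htrans (hCmem.2 B' hB') hrCB)
    · rintro D ⟨hDA, hDmax, hDmin⟩
      have h1 : r C D := hDmax C hCmem.1
      have h2 : r D C := hCmem.2 D hDA
      exact Set.Subset.antisymm (hDmin C h2 hCmem.1)
        (key D hDA (fun B' hB' => htrans (hCmem.2 B' hB') h1))
  refine ⟨part1, fun f hf => ⟨?_, ?_⟩⟩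
  · -- monotone
    intro A B hAB
    obtain ⟨hfAA, hfAmax, hfAmin⟩ := hf A
    obtain ⟨hfBB, hfBmax, hfBmin⟩ := hf B
    by_cases h : r (f A) (f A ∩ f B)
    · have : f A ⊆ f A ∩ f B :=
        hfAmin _ h (fun x hx => hfAA hx.1)
      exact fun x hx => (this hx).2
    · exfalso
      have h1 : r (f A ∩ f B) (f A) := hfAmax _ (fun x hx => hfAA hx.1)
      obtain ⟨_, h3⟩ := hsuper2 (f A) (f B) ⟨h1, h⟩
      exact h3 (hfBmax _ (Set.union_subset (hfAA.trans hAB) hfBB))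
  · -- consistency
    intro A B hfAB hBA
    obtain ⟨hfAA, hfAmax, hfAmin⟩ := hf A
    have hprop : f A ⊆ B ∧ (∀ B' ⊆ B, r B' (f A)) ∧
        (∀ B' : Set X, r (f A) B' → B' ⊆ B → f A ⊆ B') :=
      ⟨hfAB, fun B' hB' => hfAmax B' (hB'.trans hBA),
        fun B' h1 h2 => hfAmin B' h1 (h2.trans hBA)⟩
    obtain ⟨hfBB, hfBmax, hfBmin⟩ := hf B
    exact ((part1 B).unique ⟨hfBB, hfBmax, hfBmin⟩ hprop)
end
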